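/- Let R be Noetherian and let h_1,...,h_s generate 𝓜 = ker[yE-A,-B] ∩ (M[y] × R[y]^m) as an R[y]-module. Then the R-submodule generated by all coefficient vectors of π(h_1),...,π(h_s) equals the maximal reachability submodule M*_0 of M. -/

import Mathlib

/-!
Every reachability submodule `U ≤ M` lies in the coefficient span of `𝓜`. Since `R` is
Noetherian, the increasing chain of submodules reached inside `U` at time `r` stabilises, so all
of `U` is reached at a common time `N`. For `x ∈ U`, steer `0` to `x` in `N` steps, continue for
`N + 1` steps inside `U` (by `(A,B)`-invariance) to some `y`, and subtract the trajectory that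
idles for `N + 1` steps and then reaches `y` in `N` steps. The difference is a trajectory from `0`
back to `0` inside `M` through `x`; read backwards, its states and controls are the coefficients
of an element of `𝓜`.

Conversely, for `(f, g) ∈ 𝓜` the coefficient relations `A f₀ + B g₀ = 0` and
`A f_{k+1} + B g_{k+1} = f_k` make the span of the coefficients of `f` invariant, and reading them
from the top down is a trajectory from `0` through each of them. Sums of reachability submodules
are reachability submodules, and the coefficients of an `R[y]`-combination of the generators lie
in the `R`-span of the generators' coefficients.
-/

open Matrix

variable {R : Type*} [CommRing R] {n m : ℕ}

/-- `U` is `(A,B)`-invariant: `A·U ⊆ U + im B`. -/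
def ABInvariant (A : Matrix (Fin n) (Fin n) R) (B : Matrix (Fin n) (Fin m) R)
    (U : Submodule R (Fin n → R)) : Prop :=
  ∀ x ∈ U, A.mulVec x ∈ U ⊔ LinearMap.range B.mulVecLin

/-- `x` is reached from `0` at time `r` by a trajectory staying in `U`. -/
def ABReached (A : Matrix (Fin n) (Fin n) R) (B : Matrix (Fin n) (Fin m) R)
    (U : Submodule R (Fin n → R)) (x : Fin n → R) (r : ℕ) : Prop :=
  ∃ (u : ℕ → Fin m → R) (xs : ℕ → Fin n → R),
    xs 0 = 0 ∧ (∀ k, xs (k + 1) = A.mulVec (xs k) + B.mulVec (u k)) ∧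
    (∀ k, 1 ≤ k → k ≤ r → xs k ∈ U) ∧ xs r = x

/-- `U` is a reachability submodule. -/
def ABReachability (A : Matrix (Fin n) (Fin n) R) (B : Matrix (Fin n) (Fin m) R)
    (U : Submodule R (Fin n → R)) : Prop :=
  ABInvariant A B U ∧ ∀ x ∈ U, ∃ r, ABReached A B U x r

open Polynomial

/-- The `k`-th coefficient vector of a polynomial vector. -/
def coeffVec (f : Fin n → R[X]) (k : ℕ) : Fin n → R := fun i => (f i).coeff k

/-- The `R`-submodule generated by the coefficient vectors of `f`. -/
def Uf (f : Fin n → R[X]) : Submodule R (Fin n → R) :=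
  Submodule.span R (Set.range (coeffVec f))

/-- The kernel condition `(yE - A) f = B g`. -/
def kerCond (A : Matrix (Fin n) (Fin n) R) (B : Matrix (Fin n) (Fin m) R)
    (f : Fin n → R[X]) (g : Fin m → R[X]) : Prop :=
  ((X : R[X]) • (1 : Matrix (Fin n) (Fin n) R[X]) - A.map C).mulVec f = (B.map C).mulVec g

/-- The module `𝓜 = ker[yE-A,-B] ∩ (M[y] × R[y]^m)`. -/
def scrM (A : Matrix (Fin n) (Fin n) R) (B : Matrix (Fin n) (Fin m) R)
    (M : Submodule R (Fin n → R)) : Set ((Fin n → R[X]) × (Fin m → R[X])) :=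
  {p | kerCond A B p.1 p.2 ∧ ∀ k, coeffVec p.1 k ∈ M}

section Trajectory

variable (A : Matrix (Fin n) (Fin n) R) (B : Matrix (Fin n) (Fin m) R)

def abTrajectory (x₀ : Fin n → R) (u : ℕ → Fin m → R) : ℕ → Fin n → R
  | 0 => x₀
  | k + 1 => A *ᵥ abTrajectory x₀ u k + B *ᵥ u k

def appendAt {α : Type*} (u : ℕ → α) (T : ℕ) (v : ℕ → α) : ℕ → α :=
  fun k => if k < T then u k else v (k - T)

variable {A B}

lemma abTrajectory_zero_zero (k : ℕ) : abTrajectory A B 0 0 k = 0 := by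
  induction k with
  | zero => rfl
  | succ k ih => simp [abTrajectory, ih]

lemma abTrajectory_zero_add (u v : ℕ → Fin m → R) (k : ℕ) :
    abTrajectory A B 0 (u + v) k = abTrajectory A B 0 u k + abTrajectory A B 0 v k := by
  induction k with
  | zero => simp [abTrajectory]
  | succ k ih => simp only [abTrajectory, ih, Pi.add_apply, mulVec_add]; abel

lemma abTrajectory_zero_sub (u v : ℕ → Fin m → R) (k : ℕ) :
    abTrajectory A B 0 (u - v) k = abTrajectory A B 0 u k - abTrajectory A B 0 v k := by
  induction k with
  | zero => simp [abTrajectory]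
  | succ k ih => simp only [abTrajectory, ih, Pi.sub_apply, mulVec_sub]; abel

lemma abTrajectory_zero_smul (c : R) (u : ℕ → Fin m → R) (k : ℕ) :
    abTrajectory A B 0 (c • u) k = c • abTrajectory A B 0 u k := by
  induction k with
  | zero => simp [abTrajectory]
  | succ k ih => simp only [abTrajectory, ih, Pi.smul_apply, mulVec_smul, smul_add]

lemma abTrajectory_appendAt_of_le (x₀ : Fin n → R) (u v : ℕ → Fin m → R) {T j : ℕ}
    (hj : j ≤ T) : abTrajectory A B x₀ (appendAt u T v) j = abTrajectory A B x₀ u j := by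
  induction j with
  | zero => rfl
  | succ j ih =>
    simp only [abTrajectory, ih (by omega), appendAt, if_pos (show j < T by omega)]

lemma abTrajectory_appendAt_add (x₀ : Fin n → R) (u v : ℕ → Fin m → R) (T j : ℕ) :
    abTrajectory A B x₀ (appendAt u T v) (T + j) =
      abTrajectory A B (abTrajectory A B x₀ u T) v j := by
  induction j with
  | zero => exact abTrajectory_appendAt_of_le x₀ u v le_rfl
  | succ j ih =>
    rw [← add_assoc, abTrajectory, ih, abTrajectory, appendAt, if_neg (by omega),
      Nat.add_sub_cancel_left]

lemma abTrajectory_delay_of_le (u : ℕ → Fin m → R) {T j : ℕ} (hj : j ≤ T) :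
    abTrajectory A B 0 (appendAt 0 T u) j = 0 := by
  rw [abTrajectory_appendAt_of_le 0 0 u hj, abTrajectory_zero_zero]

lemma abTrajectory_delay_add (u : ℕ → Fin m → R) (T j : ℕ) :
    abTrajectory A B 0 (appendAt 0 T u) (T + j) = abTrajectory A B 0 u j := by
  rw [abTrajectory_appendAt_add, abTrajectory_zero_zero]

lemma abReached_iff {U : Submodule R (Fin n → R)} {x : Fin n → R} {r : ℕ} :
    ABReached A B U x r ↔
      ∃ u, (∀ k ≤ r, abTrajectory A B 0 u k ∈ U) ∧ abTrajectory A B 0 u r = x := by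
  constructor
  · rintro ⟨u, xs, h0, hstep, hU, rfl⟩
    have hxs : ∀ k, xs k = abTrajectory A B 0 u k := by
      intro k
      induction k with
      | zero => exact h0
      | succ k ih => rw [hstep, ih, abTrajectory]
    refine ⟨u, fun k hk => ?_, (hxs r).symm⟩
    rcases Nat.eq_zero_or_pos k with rfl | hk0
    · exact U.zero_mem
    · exact hxs k ▸ hU k hk0 hk
  · rintro ⟨u, hU, rfl⟩
    exact ⟨u, abTrajectory A B 0 u, rfl, fun k => rfl, fun k _ hk => hU k hk, rfl⟩

lemma ABInvariant.exists_forall_mem {U : Submodule R (Fin n → R)} (hU : ABInvariant A B U)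
    {x : Fin n → R} (hx : x ∈ U) : ∃ v, ∀ j, abTrajectory A B x v j ∈ U := by
  have hfeedback : ∀ y, ∃ b : Fin m → R, y ∈ U → A *ᵥ y + B *ᵥ b ∈ U := by
    intro y
    by_cases hy : y ∈ U
    · obtain ⟨y', hy', _, ⟨b, rfl⟩, hsum⟩ := Submodule.mem_sup.mp (hU y hy)
      refine ⟨-b, fun _ => ?_⟩
      rwa [mulVec_neg, ← hsum, mulVecLin_apply, add_neg_cancel_right]
    · exact ⟨0, fun h => absurd h hy⟩
  choose F hF using hfeedback
  let xs : ℕ → Fin n → R := fun j => (fun y => A *ᵥ y + B *ᵥ F y)^[j] x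
  have hxs : ∀ j, xs j ∈ U := by
    intro j
    induction j with
    | zero => exact hx
    | succ j ih => simpa only [xs, Function.iterate_succ_apply'] using hF _ ih
  refine ⟨fun j => F (xs j), fun j => ?_⟩
  suffices abTrajectory A B x (fun j => F (xs j)) j = xs j from this ▸ hxs j
  induction j with
  | zero => rfl
  | succ j ih => simp only [abTrajectory, ih, xs, Function.iterate_succ_apply']

end Trajectory

section Reachability

variable (A : Matrix (Fin n) (Fin n) R) (B : Matrix (Fin n) (Fin m) R)
  (U : Submodule R (Fin n → R))

def reachedSubmodule (r : ℕ) : Submodule R (Fin n → R) where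
  carrier := {x | ∃ u, (∀ k ≤ r, abTrajectory A B 0 u k ∈ U) ∧ abTrajectory A B 0 u r = x}
  zero_mem' :=
    ⟨0, fun k _ => by rw [abTrajectory_zero_zero]; exact U.zero_mem, abTrajectory_zero_zero r⟩
  add_mem' := by
    rintro _ _ ⟨u, hu, rfl⟩ ⟨v, hv, rfl⟩
    refine ⟨u + v, fun k hk => ?_, abTrajectory_zero_add u v r⟩
    rw [abTrajectory_zero_add]
    exact U.add_mem (hu k hk) (hv k hk)
  smul_mem' := by
    rintro c _ ⟨u, hu, rfl⟩
    refine ⟨c • u, fun k hk => ?_, abTrajectory_zero_smul c u r⟩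
    rw [abTrajectory_zero_smul]
    exact U.smul_mem c (hu k hk)

variable {A B U}

lemma mem_reachedSubmodule_iff {x : Fin n → R} {r : ℕ} :
    x ∈ reachedSubmodule A B U r ↔ ABReached A B U x r :=
  abReached_iff.symm

lemma reachedSubmodule_mono : Monotone (reachedSubmodule A B U) := by
  intro r s hrs x ⟨u, hu, hx⟩
  obtain ⟨t, rfl⟩ := Nat.exists_eq_add_of_le hrs
  refine ⟨appendAt 0 t u, fun k hk => ?_, ?_⟩
  · rcases le_or_gt k t with hkt | hkt
    · rw [abTrajectory_delay_of_le u hkt]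
      exact U.zero_mem
    · obtain ⟨i, rfl⟩ := Nat.exists_eq_add_of_le hkt.le
      rw [abTrajectory_delay_add]
      exact hu i (by omega)
  · rw [add_comm, abTrajectory_delay_add, hx]

lemma reachedSubmodule_mono_right {V : Submodule R (Fin n → R)} (hUV : U ≤ V) (r : ℕ) :
    reachedSubmodule A B U r ≤ reachedSubmodule A B V r :=
  fun _ ⟨u, hu, hx⟩ => ⟨u, fun k hk => hUV (hu k hk), hx⟩

lemma abInvariant_iff_le_comap :
    ABInvariant A B U ↔ U ≤ (U ⊔ LinearMap.range B.mulVecLin).comap A.mulVecLin :=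
  Iff.rfl

lemma abReachability_iff :
    ABReachability A B U ↔ ABInvariant A B U ∧ U ≤ ⨆ r, reachedSubmodule A B U r := by
  simp only [ABReachability, SetLike.le_def,
    Submodule.mem_iSup_of_directed _ reachedSubmodule_mono.directed_le, mem_reachedSubmodule_iff]

lemma ABReachability.iSup {ι : Sort*} {U : ι → Submodule R (Fin n → R)}
    (hU : ∀ i, ABReachability A B (U i)) : ABReachability A B (⨆ i, U i) := by
  simp only [abReachability_iff, abInvariant_iff_le_comap] at hU ⊢
  refine ⟨iSup_le fun i => ?_, iSup_le fun i => ?_⟩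
  · exact (hU i).1.trans (Submodule.comap_mono (sup_le_sup_right (le_iSup U i) _))
  · exact (hU i).2.trans (iSup_mono fun r => reachedSubmodule_mono_right (le_iSup U i) r)

lemma ABReachability.exists_le_reachedSubmodule [IsNoetherianRing R]
    (hU : ABReachability A B U) : ∃ N, U ≤ reachedSubmodule A B U N := by
  obtain ⟨N, hN⟩ := monotone_stabilizes_iff_noetherian.mpr inferInstance
    ⟨reachedSubmodule A B U, reachedSubmodule_mono⟩
  refine ⟨N, (abReachability_iff.mp hU).2.trans (iSup_le fun r => ?_)⟩
  rcases le_total r N with h | h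
  · exact reachedSubmodule_mono h
  · exact (hN r h).ge

end Reachability

section Polynomial

lemma coeffVec_mem_Uf (f : Fin n → R[X]) (k : ℕ) : coeffVec f k ∈ Uf f :=
  Submodule.subset_span ⟨k, rfl⟩

lemma Uf_le_iff {f : Fin n → R[X]} {V : Submodule R (Fin n → R)} :
    Uf f ≤ V ↔ ∀ k, coeffVec f k ∈ V := by
  rw [Uf, Submodule.span_le, Set.range_subset_iff]
  rfl

lemma eq_iff_forall_coeffVec_eq {f f' : Fin n → R[X]} :
    f = f' ↔ ∀ k, coeffVec f k = coeffVec f' k := by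
  refine ⟨fun h _ => h ▸ rfl, fun h => funext fun i => Polynomial.ext fun k => congrFun (h k) i⟩

lemma coeffVec_add (f f' : Fin n → R[X]) (k : ℕ) :
    coeffVec (f + f') k = coeffVec f k + coeffVec f' k := by
  funext i
  simp [coeffVec]

lemma coeffVec_map_C_mulVec {l : ℕ} (A : Matrix (Fin n) (Fin l) R) (f : Fin l → R[X]) (k : ℕ) :
    coeffVec (A.map C *ᵥ f) k = A *ᵥ coeffVec f k := by
  funext i
  simp [coeffVec, mulVec, dotProduct, coeff_C_mul]

lemma coeffVec_sum_smul {ι : Type*} [Fintype ι] (c : ι → R[X]) (f : ι → Fin n → R[X])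
    (k : ℕ) : coeffVec (∑ i, c i • f i) k =
      ∑ i, ∑ ab ∈ Finset.HasAntidiagonal.antidiagonal k, (c i).coeff ab.1 • coeffVec (f i) ab.2 := by
  funext j
  simp [coeffVec, finsetSum_coeff, coeff_mul, Finset.sum_apply]

lemma Uf_sum_smul_le {ι : Type*} [Fintype ι] (c : ι → R[X]) (f : ι → Fin n → R[X]) :
    Uf (∑ i, c i • f i) ≤ ⨆ i, Uf (f i) := by
  refine Uf_le_iff.mpr fun k => ?_
  rw [coeffVec_sum_smul]
  exact Submodule.sum_mem _ fun i _ => Submodule.sum_mem _ fun ab _ =>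
    Submodule.smul_mem _ _ (Submodule.mem_iSup_of_mem i (coeffVec_mem_Uf _ _))

lemma exists_le_coeffVec_eq_zero (f : Fin n → R[X]) (k : ℕ) :
    ∃ D, k ≤ D ∧ coeffVec f D = 0 := by
  refine ⟨k + ∑ i, (f i).natDegree + 1, by omega, funext fun i => ?_⟩
  have := Finset.single_le_sum (f := fun i => (f i).natDegree) (fun _ _ => Nat.zero_le _)
    (Finset.mem_univ i)
  exact coeff_eq_zero_of_natDegree_lt (by omega)

variable {A : Matrix (Fin n) (Fin n) R} {B : Matrix (Fin n) (Fin m) R}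

lemma coeffVec_X_smul_zero (f : Fin n → R[X]) : coeffVec ((X : R[X]) • f) 0 = 0 := by
  funext i
  simp [coeffVec]

lemma coeffVec_X_smul_succ (f : Fin n → R[X]) (k : ℕ) :
    coeffVec ((X : R[X]) • f) (k + 1) = coeffVec f k := by
  funext i
  simp [coeffVec]

lemma kerCond_iff {f : Fin n → R[X]} {g : Fin m → R[X]} :
    kerCond A B f g ↔ A *ᵥ coeffVec f 0 + B *ᵥ coeffVec g 0 = 0 ∧
      ∀ k, A *ᵥ coeffVec f (k + 1) + B *ᵥ coeffVec g (k + 1) = coeffVec f k := by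
  rw [kerCond, sub_mulVec, smul_mulVec, one_mulVec, sub_eq_iff_eq_add', eq_iff_forall_coeffVec_eq]
  simp only [coeffVec_add, coeffVec_map_C_mulVec]
  refine ⟨fun h => ⟨?_, fun k => ?_⟩, fun ⟨h0, hsucc⟩ k => ?_⟩
  · rw [← h 0, coeffVec_X_smul_zero]
  · rw [← h (k + 1), coeffVec_X_smul_succ]
  · rcases k with _ | k
    · rw [h0, coeffVec_X_smul_zero]
    · rw [hsucc, coeffVec_X_smul_succ]

end Polynomial

section KernelAndLoops

variable {A : Matrix (Fin n) (Fin n) R} {B : Matrix (Fin n) (Fin m) R}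

lemma abTrajectory_reverse_coeffVec {f : Fin n → R[X]} {g : Fin m → R[X]}
    (hker : kerCond A B f g) {D : ℕ} (hD : coeffVec f D = 0) {j : ℕ} (hj : j ≤ D) :
    abTrajectory A B 0 (fun i => coeffVec g (D - i)) j = coeffVec f (D - j) := by
  induction j with
  | zero => exact hD.symm
  | succ j ih =>
    obtain ⟨d, hd⟩ : ∃ d, D - j = d + 1 := ⟨D - j - 1, by omega⟩
    rw [abTrajectory, ih (by omega), hd, (kerCond_iff.mp hker).2 d, show D - (j + 1) = d by omega]

lemma abReachability_Uf {f : Fin n → R[X]} {g : Fin m → R[X]} (hker : kerCond A B f g) :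
    ABReachability A B (Uf f) := by
  obtain ⟨h0, hsucc⟩ := kerCond_iff.mp hker
  rw [abReachability_iff, abInvariant_iff_le_comap]
  refine ⟨Uf_le_iff.mpr fun k => ?_, Uf_le_iff.mpr fun k => ?_⟩
  · rw [Submodule.mem_comap, mulVecLin_apply]
    rcases k with _ | k
    · rw [eq_neg_of_add_eq_zero_left h0]
      exact neg_mem (Submodule.mem_sup_right ⟨_, rfl⟩)
    · rw [eq_sub_of_add_eq (hsucc k)]
      exact sub_mem (Submodule.mem_sup_left (coeffVec_mem_Uf f k))
        (Submodule.mem_sup_right ⟨_, rfl⟩)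
  · obtain ⟨D, hkD, hD⟩ := exists_le_coeffVec_eq_zero f k
    refine Submodule.mem_iSup_of_mem (D - k) ⟨fun i => coeffVec g (D - i), fun j hj => ?_, ?_⟩
    · rw [abTrajectory_reverse_coeffVec hker hD (by omega)]
      exact coeffVec_mem_Uf f _
    · rw [abTrajectory_reverse_coeffVec hker hD (by omega), Nat.sub_sub_self hkD]

noncomputable def revPoly {ι : Type*} (z : ℕ → ι → R) (T : ℕ) : ι → R[X] :=
  fun i => ∑ k ∈ Finset.range (T + 1), C (z (T - k) i) * X ^ k

lemma coeffVec_revPoly {l : ℕ} (z : ℕ → Fin l → R) (T k : ℕ) :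
    coeffVec (revPoly z T) k = if k ≤ T then z (T - k) else 0 := by
  funext i
  simp only [coeffVec, revPoly, finsetSum_coeff, coeff_C_mul, coeff_X_pow, mul_ite, mul_one,
    mul_zero, Finset.sum_ite_eq, Finset.mem_range, Nat.lt_succ_iff]
  split_ifs <;> rfl

lemma revPoly_mem_scrM {M : Submodule R (Fin n → R)} {u : ℕ → Fin m → R} {T : ℕ}
    (hT : abTrajectory A B 0 u (T + 1) = 0) (hM : ∀ j ≤ T, abTrajectory A B 0 u j ∈ M) :
    (revPoly (abTrajectory A B 0 u) T, revPoly u T) ∈ scrM A B M := by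
  refine ⟨kerCond_iff.mpr ⟨?_, fun k => ?_⟩, fun k => ?_⟩ <;> simp only [coeffVec_revPoly]
  · exact hT
  · by_cases hk : k + 1 ≤ T
    · rw [if_pos hk, if_pos hk, if_pos (by omega), show T - k = T - (k + 1) + 1 by omega]
      rfl
    · rw [if_neg hk, if_neg hk, mulVec_zero, mulVec_zero, add_zero]
      split_ifs with hkT
      · rw [show T - k = 0 by omega]
        rfl
      · rfl
  · split_ifs with hk
    · exact hM _ (by omega)
    · exact M.zero_mem

lemma ABReachability.exists_mem_scrM_coeffVec_eq [IsNoetherianRing R]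
    {M U : Submodule R (Fin n → R)} (hU : ABReachability A B U) (hUM : U ≤ M)
    {x : Fin n → R} (hx : x ∈ U) : ∃ p ∈ scrM A B M, ∃ k, coeffVec p.1 k = x := by
  obtain ⟨N, hN⟩ := hU.exists_le_reachedSubmodule
  obtain ⟨u₁, hu₁, hx₁⟩ := hN hx
  obtain ⟨v, hv⟩ := hU.1.exists_forall_mem hx
  obtain ⟨u₂, hu₂, hy₂⟩ := hN (hv (N + 1))
  refine ⟨_, revPoly_mem_scrM (u := appendAt u₁ N v - appendAt 0 (N + 1) u₂) (T := 2 * N) ?_ ?_,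
    N, ?_⟩
  · rw [abTrajectory_zero_sub, show 2 * N + 1 = N + (N + 1) by ring, abTrajectory_appendAt_add,
      hx₁, Nat.add_comm N (N + 1), abTrajectory_delay_add, hy₂, sub_self]
  · intro j hj
    rw [abTrajectory_zero_sub]
    refine hUM (U.sub_mem ?_ ?_)
    · rcases le_or_gt j N with h | h
      · rw [abTrajectory_appendAt_of_le _ _ _ h]
        exact hu₁ j h
      · obtain ⟨i, rfl⟩ := Nat.exists_eq_add_of_le h.le
        rw [abTrajectory_appendAt_add, hx₁]
        exact hv i
    · rcases le_or_gt j (N + 1) with h | h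
      · rw [abTrajectory_delay_of_le _ h]
        exact U.zero_mem
      · obtain ⟨i, rfl⟩ := Nat.exists_eq_add_of_le h.le
        rw [abTrajectory_delay_add]
        exact hu₂ i (by omega)
  · rw [coeffVec_revPoly, if_pos (by omega), show 2 * N - N = N by omega, abTrajectory_zero_sub,
      abTrajectory_appendAt_of_le _ _ _ le_rfl, abTrajectory_delay_of_le _ (by omega), hx₁,
      sub_zero]

end KernelAndLoops

theorem stmt_13 [IsNoetherianRing R] (A : Matrix (Fin n) (Fin n) R)
    (B : Matrix (Fin n) (Fin m) R) (M : Submodule R (Fin n → R))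
    (s : ℕ) (h : Fin s → (Fin n → R[X]) × (Fin m → R[X]))
    (hmem : ∀ i, h i ∈ scrM A B M)
    (hgen : ∀ p ∈ scrM A B M, ∃ c : Fin s → R[X], p = ∑ i, c i • h i) :
    Submodule.span R (⋃ i, Set.range (coeffVec (h i).1)) =
      sSup {U : Submodule R (Fin n → R) | ABReachability A B U ∧ U ≤ M} := by
  rw [Submodule.span_iUnion]
  refine le_antisymm (le_sSup ⟨ABReachability.iSup fun i => abReachability_Uf (hmem i).1,
    iSup_le fun i => Uf_le_iff.mpr (hmem i).2⟩) (sSup_le ?_)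
  rintro U ⟨hU, hUM⟩ x hx
  obtain ⟨p, hp, k, rfl⟩ := hU.exists_mem_scrM_coeffVec_eq hUM hx
  obtain ⟨c, rfl⟩ := hgen p hp
  have hfst : (∑ i, c i • h i).1 = ∑ i, c i • (h i).1 := by simp [Prod.fst_sum]
  exact Uf_sum_smul_le c (fun i => (h i).1) (hfst ▸ coeffVec_mem_Uf _ k)
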